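/- Let m ≥ 2, let t ≥ 1, and let φ be an automorphism of the generalized Mycielskian μ_t(K_{1,m}) with root w. Then φ(w) ∈ {w, u₀^t}, where u₀^t is the top-level shadow vertex of the unique vertex of maximum degree in K_{1,m}. -/

import Mathlib

open SimpleGraph

universe u

/-- A distinguishing edge coloring: no nontrivial automorphism preserves the coloring. -/
def IsDistEdgeColoring {V : Type u} (G : SimpleGraph V) {C : Type*} (c : G.edgeSet → C) : Prop :=
  ∀ φ : G ≃g G, (∀ e : G.edgeSet, c (φ.mapEdgeSet e) = c e) → ∀ v, φ v = v

/-- The distinguishing index: least number of colors in a distinguishing edge coloring. -/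
noncomputable def distIndex {V : Type u} (G : SimpleGraph V) : ℕ :=
  sInf {k : ℕ | ∃ c : G.edgeSet → Fin k, IsDistEdgeColoring G c}

/-- The star `K_{1,m}` with center `0`. -/
def starGraph (m : ℕ) : SimpleGraph (Fin (m + 1)) :=
  SimpleGraph.fromRel fun a _ => a = 0

/-- The Mycielskian: `Sum.inl a` are original vertices, `Sum.inr (Sum.inl a)` their
shadows, and `Sum.inr (Sum.inr _)` the root. -/
def myc {V : Type u} (G : SimpleGraph V) : SimpleGraph (V ⊕ V ⊕ PUnit.{u+1}) :=
  SimpleGraph.fromRel fun x y =>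
    match x, y with
    | Sum.inl a, Sum.inl b => G.Adj a b
    | Sum.inl a, Sum.inr (Sum.inl b) => G.Adj a b
    | Sum.inr (Sum.inl _), Sum.inr (Sum.inr _) => True
    | _, _ => False

/-- The generalized Mycielskian with `t` extra levels: `Sum.inl (j, a)` is the level-`j`
copy of vertex `a` (level `0` being the original vertices), and `Sum.inr _` is the root. -/
def genMyc {V : Type u} (G : SimpleGraph V) (t : ℕ) :
    SimpleGraph ((Fin (t + 1) × V) ⊕ PUnit.{u+1}) :=
  SimpleGraph.fromRel fun x y =>
    match x, y with
    | Sum.inl (j, a), Sum.inl (k, b) =>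
        ((j.val = 0 ∧ k.val = 0) ∨ k.val = j.val + 1) ∧ G.Adj a b
    | Sum.inl (j, _), Sum.inr _ => j.val = t
    | _, _ => False

/-! Automorphisms preserve degrees. In `μ_t(G)` the root has degree `|V(G)|`, a level-`t` copy
of `v` has degree `deg v + 1`, and a copy of `v` at a lower level has degree `2 deg v`. In
`K_{1,m}` with `m ≥ 2` the centre has degree `m` and the leaves degree `1`, so the only vertex
besides the root with degree `m + 1` is the top copy of the centre. -/

open Set

theorem SimpleGraph.Iso.ncard_neighborSet_apply {V W : Type*} {G : SimpleGraph V}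
    {G' : SimpleGraph W} (f : G ≃g G') (v : V) :
    (G'.neighborSet (f v)).ncard = (G.neighborSet v).ncard := by
  rw [← f.image_neighborSet, ncard_image_of_injective _ f.injective]

section GenMyc

variable {V : Type u} (G : SimpleGraph V) (t : ℕ)

/-- The levels whose copies of `N(v)` are joined to the level-`j` copy of `v`. As `j - 1`
truncates, level `0` is joined to itself: these are the original edges of `G`. -/
def genMycAdjLevels (j : Fin (t + 1)) : Set (Fin (t + 1)) :=
  {k | k.val = j.val - 1 ∨ k.val = j.val + 1}

theorem ncard_genMycAdjLevels_of_lt {j : Fin (t + 1)} (hj : j.val < t) :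
    (genMycAdjLevels t j).ncard = 2 := by
  have : genMycAdjLevels t j = {⟨j.val - 1, by omega⟩, ⟨j.val + 1, by omega⟩} := by
    ext k
    simp [genMycAdjLevels, Fin.ext_iff]
  rw [this, ncard_pair (by simp [Fin.ext_iff])]

theorem ncard_genMycAdjLevels_last : (genMycAdjLevels t (Fin.last t)).ncard = 1 := by
  have : genMycAdjLevels t (Fin.last t) = {⟨t - 1, by omega⟩} := by
    ext k
    simp only [genMycAdjLevels, Fin.val_last, mem_ofPred_eq, mem_singleton_iff, Fin.ext_iff]
    omega
  rw [this, ncard_singleton]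

variable {G t}

theorem genMyc_adj_inl_inl {j k : Fin (t + 1)} {a b : V} :
    (genMyc G t).Adj (.inl (j, a)) (.inl (k, b)) ↔ k ∈ genMycAdjLevels t j ∧ G.Adj a b := by
  simp only [genMyc, fromRel_adj, genMycAdjLevels, mem_ofPred_eq]
  constructor
  · rintro ⟨-, ⟨hjk, hab⟩ | ⟨hkj, hba⟩⟩
    · exact ⟨by omega, hab⟩
    · exact ⟨by omega, hba.symm⟩
  · rintro ⟨hjk, hab⟩
    refine ⟨fun h => hab.ne (Prod.ext_iff.mp (Sum.inl_injective h)).2, ?_⟩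
    rcases Nat.eq_zero_or_pos j.val with hj | hj
    · exact .inl ⟨by omega, hab⟩
    · rcases hjk with hk | hk
      · exact .inr ⟨by omega, hab.symm⟩
      · exact .inl ⟨by omega, hab⟩

theorem genMyc_adj_inl_inr {j : Fin (t + 1)} {a : V} {r : PUnit} :
    (genMyc G t).Adj (.inl (j, a)) (.inr r) ↔ j = Fin.last t := by
  simp only [genMyc, fromRel_adj, ne_eq, reduceCtorEq, not_false_eq_true, or_false, true_and,
    Fin.ext_iff, Fin.val_last]

theorem genMyc_neighborSet_inr (r : PUnit) :
    (genMyc G t).neighborSet (.inr r) = range fun a => .inl (Fin.last t, a) := by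
  ext (⟨j, a⟩ | s)
  · simp [genMyc_adj_inl_inr, (genMyc G t).adj_comm (.inr r), eq_comm]
  · simp [genMyc]

theorem genMyc_neighborSet_inl_of_ne_last {j : Fin (t + 1)} (hj : j ≠ Fin.last t) (a : V) :
    (genMyc G t).neighborSet (.inl (j, a)) =
      Sum.inl '' (genMycAdjLevels t j ×ˢ G.neighborSet a) := by
  ext (⟨k, b⟩ | s)
  · simp [genMyc_adj_inl_inl]
  · simp [genMyc_adj_inl_inr, hj]

theorem genMyc_neighborSet_inl_last (a : V) :
    (genMyc G t).neighborSet (.inl (Fin.last t, a)) =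
      insert (.inr PUnit.unit)
        (Sum.inl '' (genMycAdjLevels t (Fin.last t) ×ˢ G.neighborSet a)) := by
  ext (⟨k, b⟩ | s)
  · simp [genMyc_adj_inl_inl]
  · simp [genMyc_adj_inl_inr]

theorem ncard_neighborSet_genMyc_inr (r : PUnit) :
    ((genMyc G t).neighborSet (.inr r)).ncard = Nat.card V := by
  rw [genMyc_neighborSet_inr, ← image_univ,
    ncard_image_of_injective _ fun a b h => (Prod.ext_iff.mp (Sum.inl_injective h)).2,
    ncard_univ]

theorem ncard_neighborSet_genMyc_inl_of_lt {j : Fin (t + 1)} (hj : j.val < t) (a : V) :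
    ((genMyc G t).neighborSet (.inl (j, a))).ncard = 2 * (G.neighborSet a).ncard := by
  rw [genMyc_neighborSet_inl_of_ne_last (Fin.ne_of_lt hj) a,
    ncard_image_of_injective _ Sum.inl_injective, ncard_prod, ncard_genMycAdjLevels_of_lt t hj]

theorem ncard_neighborSet_genMyc_inl_last [Finite V] (a : V) :
    ((genMyc G t).neighborSet (.inl (Fin.last t, a))).ncard = (G.neighborSet a).ncard + 1 := by
  rw [genMyc_neighborSet_inl_last, ncard_insert_of_notMem (by simp),
    ncard_image_of_injective _ Sum.inl_injective, ncard_prod, ncard_genMycAdjLevels_last, one_mul]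

end GenMyc

section StarGraph

variable {m : ℕ}

theorem starGraph_ncard_neighborSet_zero : ((_root_.starGraph m).neighborSet 0).ncard = m := by
  have : (_root_.starGraph m).neighborSet 0 = {0}ᶜ := by
    ext a
    simp [_root_.starGraph, eq_comm]
  rw [this, ncard_compl, Nat.card_eq_fintype_card, Fintype.card_fin, ncard_singleton,
    Nat.add_sub_cancel]

theorem starGraph_ncard_neighborSet_of_ne_zero {a : Fin (m + 1)} (ha : a ≠ 0) :
    ((_root_.starGraph m).neighborSet a).ncard = 1 := by
  have : (_root_.starGraph m).neighborSet a = {0} := by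
    ext b
    simp only [_root_.starGraph, mem_neighborSet, fromRel_adj, mem_singleton_iff]
    grind
  rw [this, ncard_singleton]

end StarGraph

theorem genMyc_star_root_image_general (m t : ℕ) (hm : 2 ≤ m)
    (φ : genMyc (_root_.starGraph m) t ≃g genMyc (_root_.starGraph m) t) :
    φ (Sum.inr PUnit.unit) = Sum.inr PUnit.unit ∨
      φ (Sum.inr PUnit.unit) = Sum.inl (Fin.last t, 0) := by
  have hdeg := φ.ncard_neighborSet_apply (Sum.inr PUnit.unit)
  rw [ncard_neighborSet_genMyc_inr, Nat.card_eq_fintype_card, Fintype.card_fin] at hdeg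
  rcases hφ : φ (Sum.inr PUnit.unit) with ⟨j, a⟩ | r
  · rw [hφ] at hdeg
    rcases eq_or_ne a 0 with rfl | ha
    · obtain hj | rfl := (Fin.le_last j).lt_or_eq
      · rw [ncard_neighborSet_genMyc_inl_of_lt hj, starGraph_ncard_neighborSet_zero] at hdeg
        omega
      · exact .inr rfl
    · obtain hj | rfl := (Fin.le_last j).lt_or_eq
      · rw [ncard_neighborSet_genMyc_inl_of_lt hj,
          starGraph_ncard_neighborSet_of_ne_zero ha] at hdeg
        omega
      · rw [ncard_neighborSet_genMyc_inl_last, starGraph_ncard_neighborSet_of_ne_zero ha] at hdeg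
        omega
  · exact .inl rfl

theorem genMyc_star_root_image (m t : ℕ) (hm : 2 ≤ m) (ht : 1 ≤ t)
    (φ : genMyc (_root_.starGraph m) t ≃g genMyc (_root_.starGraph m) t) :
    φ (Sum.inr PUnit.unit) = Sum.inr PUnit.unit ∨
      φ (Sum.inr PUnit.unit) = Sum.inl (Fin.last t, 0) :=
  genMyc_star_root_image_general m t hm φ
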